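/- arXiv:1710.06409 — 2 statements merged into one kernel-verified Lean document; each statement's English description precedes it below -/
import Mathlib

section
/- Consequently, for any square matrix M over a commutative ring R, the images of tr(M ⊗ M) and tr(M) ⊗ tr(M) agree in the cokernel of the norm map Nm : R ⊗ R → R ⊗ R. -/
open scoped TensorProduct

/-- The norm map `z ↦ z + σ(z)` as an additive homomorphism of `R ⊗[ℤ] R`. -/
noncomputable def swapNormHom (R : Type*) [CommRing R] : R ⊗[ℤ] R →+ R ⊗[ℤ] R :=
  AddMonoidHom.mk' (fun z => z + (TensorProduct.comm ℤ R R) z)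
    (by intro a b; simp only [map_add]; abel)

lemma sum_pairs_decomp {A : Type*} [AddCommGroup A] {n : ℕ} (f : Fin n → Fin n → A) :
    ∑ i : Fin n, ∑ j : Fin n, f i j
      = (∑ i : Fin n, f i i)
        + ∑ p ∈ Finset.univ.filter (fun p : Fin n × Fin n => p.1 < p.2),
            (f p.1 p.2 + f p.2 p.1) := by
  classical
  rw [← Finset.sum_product']
  have h1 : (Finset.univ ×ˢ Finset.univ : Finset (Fin n × Fin n)) = Finset.univ := by
    simp
  rw [h1]
  rw [← Finset.sum_filter_add_sum_filter_not Finset.univ (fun p : Fin n × Fin n => p.1 < p.2)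
    (fun p => f p.1 p.2)]
  have h2 : Finset.univ.filter (fun p : Fin n × Fin n => ¬ p.1 < p.2)
      = Finset.univ.filter (fun p : Fin n × Fin n => p.1 = p.2)
        ∪ Finset.univ.filter (fun p : Fin n × Fin n => p.2 < p.1) := by
    ext p
    simp only [Finset.mem_filter, Finset.mem_union, Finset.mem_univ, true_and]
    omega
  have hdisj : Disjoint (Finset.univ.filter (fun p : Fin n × Fin n => p.1 = p.2))
      (Finset.univ.filter (fun p : Fin n × Fin n => p.2 < p.1)) := by
    rw [Finset.disjoint_filter]
    intro p _ hp
    omega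
  rw [h2, Finset.sum_union hdisj]
  have h3 : ∑ p ∈ Finset.univ.filter (fun p : Fin n × Fin n => p.1 = p.2), f p.1 p.2
      = ∑ i : Fin n, f i i := by
    refine Finset.sum_nbij' (fun p => p.1) (fun i => (i, i)) ?_ ?_ ?_ ?_ ?_
    · intro p hp; simp
    · intro i _; simp
    · intro p hp
      simp only [Finset.mem_filter] at hp
      exact Prod.ext rfl hp.2
    · intro i _; rfl
    · intro p hp
      simp only [Finset.mem_filter] at hp
      show f p.1 p.2 = f p.1 p.1
      rw [hp.2]
  have h4 : ∑ p ∈ Finset.univ.filter (fun p : Fin n × Fin n => p.2 < p.1), f p.1 p.2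
      = ∑ p ∈ Finset.univ.filter (fun p : Fin n × Fin n => p.1 < p.2), f p.2 p.1 := by
    refine Finset.sum_nbij' (fun p => p.swap) (fun p => p.swap) ?_ ?_ ?_ ?_ ?_
    · intro p hp; simp only [Finset.mem_filter] at hp ⊢; exact ⟨Finset.mem_univ _, hp.2⟩
    · intro p hp; simp only [Finset.mem_filter] at hp ⊢; exact ⟨Finset.mem_univ _, hp.2⟩
    · intro p _; exact Prod.swap_swap p
    · intro p _; exact Prod.swap_swap p
    · intro p _; rfl
  rw [h3, h4, Finset.sum_add_distrib]
  abel

set_option maxHeartbeats 1000000 in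
/-- In the cokernel of the norm map, the images of `tr(M ⊗ M)` and `tr(M) ⊗ tr(M)` agree. -/
theorem trace_kronecker_eq_trace_tensor_in_coker {R : Type*} [CommRing R] {n : ℕ}
    (M : Matrix (Fin n) (Fin n) R) :
    QuotientAddGroup.mk' (swapNormHom R).range
        (∑ i : Fin n, ∑ j : Fin n, M i j ⊗ₜ[ℤ] M j i)
      = QuotientAddGroup.mk' (swapNormHom R).range (M.trace ⊗ₜ[ℤ] M.trace) := by
  classical
  rw [QuotientAddGroup.mk'_eq_mk']
  refine ⟨swapNormHom R (∑ p ∈ Finset.univ.filter (fun p : Fin n × Fin n => p.1 < p.2),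
      (M p.1 p.1 ⊗ₜ[ℤ] M p.2 p.2 - M p.1 p.2 ⊗ₜ[ℤ] M p.2 p.1)), ⟨_, rfl⟩, ?_⟩
  have htr : M.trace ⊗ₜ[ℤ] M.trace = ∑ i : Fin n, ∑ j : Fin n, M i i ⊗ₜ[ℤ] M j j := by
    rw [Matrix.trace]
    simp only [Matrix.diag]
    rw [TensorProduct.sum_tmul]
    exact Finset.sum_congr rfl fun i _ => TensorProduct.tmul_sum _ _ _
  rw [htr, sum_pairs_decomp (fun i j => M i j ⊗ₜ[ℤ] M j i),
    sum_pairs_decomp (fun i j => M i i ⊗ₜ[ℤ] M j j)]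
  simp only [swapNormHom, AddMonoidHom.mk'_apply, map_sum, map_sub, map_add,
    TensorProduct.comm_tmul]
  simp only [Finset.sum_add_distrib, Finset.sum_sub_distrib]
  abel
end

section
/- For a square matrix M over a commutative ring R of prime characteristic p (i.e., p • 1 = 0 in R), the trace satisfies tr(M^p) = tr(M)^p. -/
/-!
In characteristic `p` the characteristic matrix satisfies `(X - C M) ^ p = X ^ p - C (M ^ p)`,
since `X` and `C M` commute. Taking determinants, `χ_{M ^ p}(X ^ p) = χ_M(X) ^ p`, and the
coefficient of degree `p (d - 1)` on both sides reads `-tr (M ^ p) = (-tr M) ^ p`.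
-/

open Polynomial

theorem Polynomial.coeff_pow_char_mul {R : Type*} [CommSemiring R] (p : ℕ) [Fact p.Prime]
    [CharP R p] (f : R[X]) (k : ℕ) : (f ^ p).coeff (p * k) = f.coeff k ^ p := by
  rw [← map_frobenius_expand, coeff_map, coeff_expand_mul' (Fact.out : p.Prime).pos,
    frobenius_def]

namespace Matrix

variable {n : Type*} [DecidableEq n] [Fintype n] {R : Type*} [CommRing R]

theorem expand_charpoly_pow_char [Nonempty n] (p : ℕ) [Fact p.Prime] [CharP R p]
    (M : Matrix n n R) :
    expand R p (M ^ p).charpoly = M.charpoly ^ p := by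
  have : (expand R p : R[X] →+* R[X]).mapMatrix (charmatrix (M ^ p)) = charmatrix M ^ p := by
    apply matPolyEquiv.injective
    rw [map_pow, matPolyEquiv_charmatrix, matPolyEquiv_eq_X_pow_sub_C, C_pow,
      sub_pow_char_of_commute p (commute_X (C M))]
  rw [charpoly, charpoly, ← det_pow, ← this]
  exact (expand R p : R[X] →+* R[X]).map_det _

theorem trace_pow_char (p : ℕ) [Fact p.Prime] [CharP R p] (M : Matrix n n R) :
    (M ^ p).trace = M.trace ^ p := by
  have hp : p.Prime := Fact.out
  cases isEmpty_or_nonempty n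
  · simp [trace, zero_pow hp.ne_zero]
  rw [trace_eq_neg_charpoly_coeff, trace_eq_neg_charpoly_coeff, neg_pow, neg_one_pow_char,
    neg_one_mul, ← coeff_pow_char_mul, ← expand_charpoly_pow_char, coeff_expand_mul' hp.pos]

end Matrix

/-- Over a commutative ring of prime characteristic `p`, `tr(M^p) = tr(M)^p`. -/
theorem trace_pow_char {p : ℕ} (hp : p.Prime) {R : Type*} [CommRing R] [CharP R p]
    {n : ℕ} (M : Matrix (Fin n) (Fin n) R) :
    (M ^ p).trace = M.trace ^ p :=
  haveI : Fact p.Prime := ⟨hp⟩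
  M.trace_pow_char p
end
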